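/- Domination: if G is an affine game with Left options G^{L1}, G^{L2} such that G^{L2} ≥ G^{L1}, then G is equivalent to the game obtained by removing G^{L1} from the set of Left options (assuming the remaining Left option set is nonempty). -/
import Mathlib


inductive AGame : Type
  | inf : AGame
  | binf : AGame
  | node : List AGame → List AGame → AGame

namespace AGame

/-- The affine games: option sets are nonempty (hereditarily). -/
inductive Valid : AGame → Prop
  | inf : Valid .inf
  | binf : Valid .binf
  | node : ∀ {L R : List AGame}, L ≠ [] → R ≠ [] →
      (∀ g ∈ L, Valid g) → (∀ g ∈ R, Valid g) → Valid (.node L R)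

/-- Total version of the disjunctive sum (value on the undefined cases `∞ + ∞̄` is junk). -/
def add' : AGame → AGame → AGame
  | .inf, _ => .inf
  | _, .inf => .inf
  | .binf, _ => .binf
  | _, .binf => .binf
  | .node L R, .node L' R' =>
      .node ((L.attach.map fun x => add' x.1 (.node L' R')) ++
             (L'.attach.map fun y => add' (.node L R) y.1))
            ((R.attach.map fun x => add' x.1 (.node L' R')) ++
             (R'.attach.map fun y => add' (.node L R) y.1))
termination_by G H => sizeOf G + sizeOf H
decreasing_by
  all_goals
    simp_wf
    first
      | (have := List.sizeOf_lt_of_mem x.2; simp_all; omega)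
      | (have := List.sizeOf_lt_of_mem y.2; simp_all; omega)

/-- The disjunctive sum, undefined (`none`) exactly when adding `∞` to `∞̄`. -/
def add : AGame → AGame → Option AGame
  | .inf, .binf => none
  | .binf, .inf => none
  | G, H => some (add' G H)

mutual
/-- `o^L(G) = L` : Left, playing first, wins `G`. -/
def lf : AGame → Bool
  | .inf => true
  | .binf => false
  | .node L _ => L.attach.any fun x => ls x.1
termination_by G => sizeOf G
decreasing_by
  simp_wf; have := List.sizeOf_lt_of_mem x.2; simp_all; omega
/-- `o^R(G) = L` : Left, playing second, wins `G`. -/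
def ls : AGame → Bool
  | .inf => true
  | .binf => false
  | .node _ R => R.attach.all fun x => lf x.1
termination_by G => sizeOf G
decreasing_by
  simp_wf; have := List.sizeOf_lt_of_mem x.2; simp_all; omega
end

/-- The combined outcome `(o^L(G), o^R(G))`, encoded as a pair of booleans
(`true` = Left wins). `(true,true)` is 𝓛, `(true,false)` is 𝓝, `(false,true)` is 𝓟,
`(false,false)` is 𝓡. -/
def outcome (G : AGame) : Bool × Bool := (lf G, ls G)

/-- The partial order of outcomes (componentwise, 𝓛 maximal, 𝓡 minimal, 𝓝 ∥ 𝓟). -/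
def OutLE (a b : Bool × Bool) : Prop :=
  (a.1 = true → b.1 = true) ∧ (a.2 = true → b.2 = true)

/-- `G ≥ H` : replacing `H` by `G` never hurts Left in any disjunctive sum. -/
def GE (G H : AGame) : Prop :=
  ∀ X : AGame, Valid X → X ≠ .inf → X ≠ .binf →
    OutLE (outcome (add' H X)) (outcome (add' G X))

/-- Game equivalence. -/
def Equiv (G H : AGame) : Prop :=
  ∀ X : AGame, Valid X → X ≠ .inf → X ≠ .binf →
    outcome (add' G X) = outcome (add' H X)

/-- The zero game `{∞̄ | ∞}`. -/
def zero : AGame := .node [.binf] [.inf]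

/-- The conjugate (players switch roles). -/
def neg : AGame → AGame
  | .inf => .binf
  | .binf => .inf
  | .node L R =>
      .node (R.attach.map fun x => neg x.1) (L.attach.map fun x => neg x.1)
termination_by G => sizeOf G
decreasing_by
  all_goals
    simp_wf
    (have := List.sizeOf_lt_of_mem x.2; simp_all; omega)


/-- Left option set (empty list for the terminating games). -/
def leftOptions : AGame → List AGame
  | .node L _ => L
  | _ => []

/-- Right option set (empty list for the terminating games). -/
def rightOptions : AGame → List AGame
  | .node _ R => R
  | _ => []

/-- A check: a game having `∞` as a Left option or `∞̄` as a Right option. -/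
def IsCheck : AGame → Prop
  | .node L R => .inf ∈ L ∨ .binf ∈ R
  | _ => False

/-- `Follower H G` : `H` is a follower of `G` (i.e. `G` itself, an option of `G`,
an option of an option, and so on). -/
inductive Follower : AGame → AGame → Prop
  | refl (G : AGame) : Follower G G
  | left {H K : AGame} {L R : List AGame} : K ∈ L → Follower H K → Follower H (.node L R)
  | right {H K : AGame} {L R : List AGame} : K ∈ R → Follower H K → Follower H (.node L R)

/-- A Conway form: distinct from `∞` and `∞̄`, with no checks among its followers. -/
def ConwayForm (G : AGame) : Prop :=
  G ≠ .inf ∧ G ≠ .binf ∧ ∀ H, Follower H G → ¬ IsCheck H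

/-- A Conway game: a game equivalent to some Conway form. -/
def ConwayGame (G : AGame) : Prop :=
  ∃ G', Valid G' ∧ ConwayForm G' ∧ Equiv G G'

/-- `J` is invertible: `J + K = 0` (in the sense of game equivalence) for some affine `K`. -/
def Invertible (J : AGame) : Prop :=
  ∃ K, Valid K ∧ ∃ S, add J K = some S ∧ Equiv S zero

/-- Number forms: the images of the surreal-number Conway forms under the embedding
that replaces an empty option set by `{∞̄}` on the Left and by `{∞}` on the Right.
Every genuine Left option is strictly less than every genuine Right option, and
all genuine options are again number forms. -/
inductive NumForm : AGame → Prop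
  | mk {L R : List AGame}
      (hL0 : L ≠ []) (hR0 : R ≠ [])
      (hLb : .binf ∈ L → L = [.binf]) (hRi : .inf ∈ R → R = [.inf])
      (hLnum : ∀ x ∈ L, x ≠ .binf → NumForm x)
      (hRnum : ∀ y ∈ R, y ≠ .inf → NumForm y)
      (hlt : ∀ x ∈ L, ∀ y ∈ R, x ≠ .binf → y ≠ .inf → GE y x ∧ ¬ GE x y) :
      NumForm (.node L R)

/-- A number: an affine game equal to (the image of) a Conway number form. -/
def IsNumber (G : AGame) : Prop := ∃ n, Valid n ∧ NumForm n ∧ Equiv G n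

/-- The pathetic tiny `⧾∞ = {0 | {0 | ∞̄}}`. -/
def tinyInf : AGame := .node [zero] [.node [zero] [.binf]]

/-- The pathetic miny `⧿∞ = {{∞ | 0} | 0}`. -/
def minyInf : AGame := .node [.node [.inf] [zero]] [zero]

end AGame

namespace AGame

theorem add'_node_node (L R L' R' : List AGame) : add' (.node L R) (.node L' R') =
      .node ((L.attach.map fun x => add' x.1 (.node L' R')) ++
             (L'.attach.map fun y => add' (.node L R) y.1))
            ((R.attach.map fun x => add' x.1 (.node L' R')) ++
             (R'.attach.map fun y => add' (.node L R) y.1)) := by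
  rw [add']

theorem add'_inf (L R : List AGame) : add' (.node L R) .inf = .inf := by
  rw [add'] <;> simp
theorem add'_binf (L R : List AGame) : add' (.node L R) .binf = .binf := by
  rw [add'] <;> simp
theorem lf_node (L R : List AGame) : (lf (.node L R) = true) ↔ ∃ x ∈ L, ls x = true := by
  rw [lf]; simp [List.any_eq_true]
theorem ls_node (L R : List AGame) : (ls (.node L R) = true) ↔ ∀ x ∈ R, lf x = true := by
  rw [ls]; simp [List.all_eq_true]

theorem key (a : AGame) (L R : List AGame)
    (b : AGame) (hb : b ∈ L) (hdom : GE b a) (X : AGame) :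
    Valid X → X ≠ .inf → X ≠ .binf →
      (lf (add' (.node (a :: L) R) X) = lf (add' (.node L R) X)) ∧
      (ls (add' (.node (a :: L) R) X) = ls (add' (.node L R) X)) := by
  match X with
  | .inf => intro _ h _; exact absurd rfl h
  | .binf => intro _ _ h; exact absurd rfl h
  | .node L' R' =>
    intro hX _ _
    have hval : ∀ y ∈ L' ++ R', Valid y := by
      cases hX with
      | node _ _ h1 h2 => intro y hy; rcases List.mem_append.mp hy with h | h
                          · exact h1 y h
                          · exact h2 y h
    have hopt : ∀ y ∈ L' ++ R',
        (lf (add' (.node (a :: L) R) y) = lf (add' (.node L R) y)) ∧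
        (ls (add' (.node (a :: L) R) y) = ls (add' (.node L R) y)) := by
      intro y hy
      match y, hval y hy with
      | .inf, _ => rw [add'_inf, add'_inf]; exact ⟨rfl, rfl⟩
      | .binf, _ => rw [add'_binf, add'_binf]; exact ⟨rfl, rfl⟩
      | .node l r, hv =>
        have := key a L R b hb hdom (.node l r) hv (by simp) (by simp)
        exact this
    rw [add'_node_node, add'_node_node]
    constructor
    · rw [Bool.eq_iff_iff, lf_node, lf_node]
      simp only [List.mem_append, List.mem_map, List.mem_attach, true_and, Subtype.exists,
        List.mem_cons, exists_prop]
      constructor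
      · rintro ⟨x, ⟨⟨z, hz, rfl⟩ | ⟨z, hz, rfl⟩, hx⟩⟩
        · rcases hz with rfl | hz
          · -- x = add' a X, use domination
            have h2 := (hdom (.node L' R') hX (by simp) (by simp)).2 hx
            exact ⟨_, Or.inl ⟨b, hb, rfl⟩, h2⟩
          · exact ⟨_, Or.inl ⟨z, hz, rfl⟩, hx⟩
        · refine ⟨_, Or.inr ⟨z, hz, rfl⟩, ?_⟩
          rw [← (hopt z (List.mem_append.mpr (Or.inl hz))).2]; exact hx
      · rintro ⟨x, ⟨⟨z, hz, rfl⟩ | ⟨z, hz, rfl⟩, hx⟩⟩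
        · exact ⟨_, Or.inl ⟨z, Or.inr hz, rfl⟩, hx⟩
        · refine ⟨_, Or.inr ⟨z, hz, rfl⟩, ?_⟩
          rw [(hopt z (List.mem_append.mpr (Or.inl hz))).2]; exact hx
    · rw [Bool.eq_iff_iff, ls_node, ls_node]
      simp only [List.mem_append, List.mem_map, List.mem_attach, true_and, Subtype.exists,
        exists_prop]
      constructor
      · rintro h x (⟨z, hz, rfl⟩ | ⟨z, hz, rfl⟩)
        · exact h _ (Or.inl ⟨z, hz, rfl⟩)
        · rw [← (hopt z (List.mem_append.mpr (Or.inr hz))).1]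
          exact h _ (Or.inr ⟨z, hz, rfl⟩)
      · rintro h x (⟨z, hz, rfl⟩ | ⟨z, hz, rfl⟩)
        · exact h _ (Or.inl ⟨z, hz, rfl⟩)
        · rw [(hopt z (List.mem_append.mpr (Or.inr hz))).1]
          exact h _ (Or.inr ⟨z, hz, rfl⟩)
termination_by sizeOf X
decreasing_by
  simp_wf
  rcases List.mem_append.mp hy with h | h <;>
    (have := List.sizeOf_lt_of_mem h; simp_all; omega)

/-- Domination: a Left option dominated by another Left option may be removed. -/
theorem domination (a : AGame) (L R : List AGame) (hL : L ≠ [])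
    (hV : Valid (.node (a :: L) R)) (b : AGame) (hb : b ∈ L) (hdom : GE b a) :
    Equiv (.node (a :: L) R) (.node L R) := by
  intro X hX h1 h2
  have := key a L R b hb hdom X hX h1 h2
  unfold outcome
  rw [this.1, this.2]
end AGame
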